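/- For ΣΠ_A-terms with the bag-of-cut-heights measure Λ: (i) if t₁ ⟹ t₂ by one of the cut-elimination rewrites (1)–(12) applied in any term context, then Λ(t₂) is strictly below Λ(t₁) in the Dershowitz–Manna multiset ordering on multisets of natural numbers; (ii) if t₁ ≡ t₂ by a single permuting conversion among (13)–(22) that does not involve a nullary cotuple or nullary tuple, then Λ(t₁) = Λ(t₂). -/

import Mathlib

/-!
Every height recorded in `Λ t` is at most `hgt t`, and no reduction step increases the height.
At a redex, the cut at the root has height strictly above every height recorded in `Λ` of the
contractum (pushing a cut past a (co)tuple duplicates cuts, but each copy sits below the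
(co)tuple's extra level), so the step trades one element of the bag for smaller ones. In a
context, only the bag of the redex changes and the enclosing cuts can only get lower. Adding 1
commutes with a maximum over a nonempty index set, so the permuting conversions without nullary
(co)tuples preserve heights, hence `Λ`.
-/

namespace Stmt1

/-- ΣΠ_A-terms: identities on atoms, atomic maps of the polycategory `A`
(elements of `Ax`), cotuples, tuples, projections, injections and cuts.
Channels carry names from `Chan`; events are represented by positions. -/
inductive Tm (Ax Chan : Type) : Type where
  | id : Chan → Chan → Tm Ax Chan
  | ax : Ax → Tm Ax Chan
  | cot : Chan → List (Tm Ax Chan) → Tm Ax Chan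
  | tup : Chan → List (Tm Ax Chan) → Tm Ax Chan
  | prj : Chan → ℕ → Tm Ax Chan → Tm Ax Chan
  | inj : Chan → ℕ → Tm Ax Chan → Tm Ax Chan
  | cut : Chan → Tm Ax Chan → Tm Ax Chan → Tm Ax Chan

variable {Ax Chan : Type}

/-- The one-step cut-elimination rewrites (1)–(12), closed under all term
contexts. -/
inductive Red : Tm Ax Chan → Tm Ax Chan → Prop where
  | r1 (γ β : Chan) (f : Tm Ax Chan) : Red (.cut γ f (.id γ β)) f
  | r2 (γ α : Chan) (g : Tm Ax Chan) : Red (.cut γ (.id α γ) g) g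
  | r3 (γ α : Chan) (fs : List (Tm Ax Chan)) (g : Tm Ax Chan) :
      Red (.cut γ (.cot α fs) g) (.cot α (fs.map fun f => .cut γ f g))
  | r4 (γ β : Chan) (f : Tm Ax Chan) (gs : List (Tm Ax Chan)) :
      Red (.cut γ f (.tup β gs)) (.tup β (gs.map fun g => .cut γ f g))
  | r5 (γ α : Chan) (k : ℕ) (f g : Tm Ax Chan) : α ≠ γ →
      Red (.cut γ (.inj α k f) g) (.inj α k (.cut γ f g))
  | r6 (γ β : Chan) (k : ℕ) (f g : Tm Ax Chan) : β ≠ γ →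
      Red (.cut γ f (.prj β k g)) (.prj β k (.cut γ f g))
  | r7 (γ α : Chan) (k : ℕ) (f g : Tm Ax Chan) :
      Red (.cut γ (.prj α k f) g) (.prj α k (.cut γ f g))
  | r8 (γ β : Chan) (k : ℕ) (f g : Tm Ax Chan) :
      Red (.cut γ f (.inj β k g)) (.inj β k (.cut γ f g))
  | r9 (γ α : Chan) (fs : List (Tm Ax Chan)) (g : Tm Ax Chan) : α ≠ γ →
      Red (.cut γ (.tup α fs) g) (.tup α (fs.map fun f => .cut γ f g))
  | r10 (γ β : Chan) (f : Tm Ax Chan) (gs : List (Tm Ax Chan)) : β ≠ γ →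
      Red (.cut γ f (.cot β gs)) (.cot β (gs.map fun g => .cut γ f g))
  | r11 (γ : Chan) (k : ℕ) (f : Tm Ax Chan) (gs : List (Tm Ax Chan)) (hk : k < gs.length) :
      Red (.cut γ (.inj γ k f) (.cot γ gs)) (.cut γ f (gs.get ⟨k, hk⟩))
  | r12 (γ : Chan) (k : ℕ) (fs : List (Tm Ax Chan)) (g : Tm Ax Chan) (hk : k < fs.length) :
      Red (.cut γ (.tup γ fs) (.prj γ k g)) (.cut γ (fs.get ⟨k, hk⟩) g)
  | cotC (α : Chan) (l r : List (Tm Ax Chan)) {f f' : Tm Ax Chan} :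
      Red f f' → Red (.cot α (l ++ f :: r)) (.cot α (l ++ f' :: r))
  | tupC (α : Chan) (l r : List (Tm Ax Chan)) {f f' : Tm Ax Chan} :
      Red f f' → Red (.tup α (l ++ f :: r)) (.tup α (l ++ f' :: r))
  | prjC (α : Chan) (k : ℕ) {f f' : Tm Ax Chan} :
      Red f f' → Red (.prj α k f) (.prj α k f')
  | injC (α : Chan) (k : ℕ) {f f' : Tm Ax Chan} :
      Red f f' → Red (.inj α k f) (.inj α k f')
  | cutL (γ : Chan) {f f' : Tm Ax Chan} (g : Tm Ax Chan) :
      Red f f' → Red (.cut γ f g) (.cut γ f' g)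
  | cutR (γ : Chan) (f : Tm Ax Chan) {g g' : Tm Ax Chan} :
      Red g g' → Red (.cut γ f g) (.cut γ f g')

/-- The permuting conversions (13)–(22) that do not involve a nullary cotuple
or a nullary tuple (all the interchanged (co)tuples are indexed by nonempty
families); a symmetric relation closed under all term contexts. -/
inductive PcNN : Tm Ax Chan → Tm Ax Chan → Prop where
  | c13 (α β : Chan) (n m : ℕ) (F : ℕ → ℕ → Tm Ax Chan) :
      α ≠ β → 0 < n → 0 < m →
      PcNN (.cot α ((List.range n).map fun i => .cot β ((List.range m).map fun j => F i j)))
           (.cot β ((List.range m).map fun j => .cot α ((List.range n).map fun i => F i j)))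
  | c14 (α β : Chan) (n m : ℕ) (F : ℕ → ℕ → Tm Ax Chan) :
      α ≠ β → 0 < n → 0 < m →
      PcNN (.tup α ((List.range n).map fun i => .tup β ((List.range m).map fun j => F i j)))
           (.tup β ((List.range m).map fun j => .tup α ((List.range n).map fun i => F i j)))
  | c15 (α β : Chan) (n k : ℕ) (F : ℕ → Tm Ax Chan) :
      α ≠ β → 0 < n →
      PcNN (.cot α ((List.range n).map fun i => .inj β k (F i)))
           (.inj β k (.cot α ((List.range n).map fun i => F i)))
  | c16 (α β : Chan) (m k : ℕ) (F : ℕ → Tm Ax Chan) :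
      α ≠ β → 0 < m →
      PcNN (.prj α k (.tup β ((List.range m).map fun j => F j)))
           (.tup β ((List.range m).map fun j => .prj α k (F j)))
  | c17 (α β : Chan) (n k : ℕ) (F : ℕ → Tm Ax Chan) :
      α ≠ β → 0 < n →
      PcNN (.cot α ((List.range n).map fun i => .prj β k (F i)))
           (.prj β k (.cot α ((List.range n).map fun i => F i)))
  | c18 (α β : Chan) (m k : ℕ) (F : ℕ → Tm Ax Chan) :
      α ≠ β → 0 < m →
      PcNN (.inj α k (.tup β ((List.range m).map fun j => F j)))
           (.tup β ((List.range m).map fun j => .inj α k (F j)))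
  | c19 (α β : Chan) (n m : ℕ) (F : ℕ → ℕ → Tm Ax Chan) :
      α ≠ β → 0 < n → 0 < m →
      PcNN (.cot α ((List.range n).map fun i => .tup β ((List.range m).map fun j => F i j)))
           (.tup β ((List.range m).map fun j => .cot α ((List.range n).map fun i => F i j)))
  | c20 (α β : Chan) (k l : ℕ) (f : Tm Ax Chan) : α ≠ β →
      PcNN (.inj α k (.inj β l f)) (.inj β l (.inj α k f))
  | c21 (α β : Chan) (k l : ℕ) (f : Tm Ax Chan) : α ≠ β →
      PcNN (.prj α k (.prj β l f)) (.prj β l (.prj α k f))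
  | c22 (α β : Chan) (k l : ℕ) (f : Tm Ax Chan) : α ≠ β →
      PcNN (.inj α k (.prj β l f)) (.prj β l (.inj α k f))
  | symm {t s : Tm Ax Chan} : PcNN t s → PcNN s t
  | cotC (α : Chan) (l r : List (Tm Ax Chan)) {f f' : Tm Ax Chan} :
      PcNN f f' → PcNN (.cot α (l ++ f :: r)) (.cot α (l ++ f' :: r))
  | tupC (α : Chan) (l r : List (Tm Ax Chan)) {f f' : Tm Ax Chan} :
      PcNN f f' → PcNN (.tup α (l ++ f :: r)) (.tup α (l ++ f' :: r))
  | prjC (α : Chan) (k : ℕ) {f f' : Tm Ax Chan} :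
      PcNN f f' → PcNN (.prj α k f) (.prj α k f')
  | injC (α : Chan) (k : ℕ) {f f' : Tm Ax Chan} :
      PcNN f f' → PcNN (.inj α k f) (.inj α k f')
  | cutL (γ : Chan) {f f' : Tm Ax Chan} (g : Tm Ax Chan) :
      PcNN f f' → PcNN (.cut γ f g) (.cut γ f' g)
  | cutR (γ : Chan) (f : Tm Ax Chan) {g g' : Tm Ax Chan} :
      PcNN g g' → PcNN (.cut γ f g) (.cut γ f g')

mutual
/-- The height of a ΣΠ-term. -/
def hgt : Tm Ax Chan → ℕ
  | .id _ _ => 1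
  | .ax _ => 1
  | .cot _ fs => 1 + hgtL fs
  | .tup _ fs => 1 + hgtL fs
  | .prj _ _ f => 1 + hgt f
  | .inj _ _ f => 1 + hgt f
  | .cut _ f g => hgt f + hgt g

/-- The maximum of the heights of a list of terms (`0` for the empty list). -/
def hgtL : List (Tm Ax Chan) → ℕ
  | [] => 0
  | f :: fs => max (hgt f) (hgtL fs)
end

mutual
/-- `Λ`: the bag (multiset) of the heights of all cut subterms of a term. -/
def lam : Tm Ax Chan → Multiset ℕ
  | .id _ _ => 0
  | .ax _ => 0
  | .cot _ fs => lamL fs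
  | .tup _ fs => lamL fs
  | .prj _ _ f => lam f
  | .inj _ _ f => lam f
  | .cut γ f g => hgt (Tm.cut γ f g) ::ₘ (lam f + lam g)

def lamL : List (Tm Ax Chan) → Multiset ℕ
  | [] => 0
  | f :: fs => lam f + lamL fs
end

/-- Dershowitz–Manna multiset ordering on multisets of natural numbers:
`N` is strictly below `M`. -/
def DMlt (N M : Multiset ℕ) : Prop :=
  ∃ X Y : Multiset ℕ, X ≠ 0 ∧ X ≤ M ∧ N = M - X + Y ∧ ∀ y ∈ Y, ∃ x ∈ X, y < x

end Stmt1

namespace Multiset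

variable {α : Type*} {M N : Multiset α}

theorem isDershowitzMannaLT_of_forall_lt [Preorder α] {a : α} (ha : a ∈ M)
    (h : ∀ y ∈ N, y < a) : IsDershowitzMannaLT N M :=
  ⟨0, N, M, by rintro rfl; simp at ha, by simp, by simp, fun y hy => ⟨a, ha, h y hy⟩⟩

theorem IsDershowitzMannaLT.add_left [Preorder α] (C : Multiset α)
    (h : IsDershowitzMannaLT N M) : IsDershowitzMannaLT (C + N) (C + M) := by
  obtain ⟨X, Y, Z, hZ, rfl, rfl, hYZ⟩ := h
  exact ⟨C + X, Y, Z, hZ, (add_assoc ..).symm, (add_assoc ..).symm, hYZ⟩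

theorem IsDershowitzMannaLT.add_right [Preorder α] (C : Multiset α)
    (h : IsDershowitzMannaLT N M) : IsDershowitzMannaLT (N + C) (M + C) := by
  simpa only [add_comm _ C] using h.add_left C

theorem IsDershowitzMannaLT.cons_of_le [PartialOrder α] {a b : α} (hab : a ≤ b)
    (h : IsDershowitzMannaLT N M) : IsDershowitzMannaLT (a ::ₘ N) (b ::ₘ M) := by
  have hcons : IsDershowitzMannaLT (a ::ₘ N) (a ::ₘ M) := by
    simpa only [singleton_add] using h.add_left {a}
  obtain hlt | rfl := hab.lt_or_eq
  · refine hcons.trans ⟨M, {a}, {b}, by simp, ?_, ?_, by simpa⟩ <;> simp [add_comm M]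
  · exact hcons

end Multiset

namespace Stmt1

open Multiset

variable {Ax Chan : Type}

theorem dmlt_iff_isDershowitzMannaLT {N M : Multiset ℕ} :
    DMlt N M ↔ IsDershowitzMannaLT N M := by
  constructor
  · rintro ⟨X, Y, hX, hXM, rfl, hY⟩
    exact ⟨M - X, Y, X, by simpa using hX, rfl, (tsub_add_cancel_of_le hXM).symm, hY⟩
  · rintro ⟨X, Y, Z, hZ, rfl, rfl, hY⟩
    exact ⟨Z, Y, by simpa using hZ, le_add_left le_rfl, by rw [add_tsub_cancel_right], hY⟩

theorem hgtL_append : ∀ l r : List (Tm Ax Chan), hgtL (l ++ r) = max (hgtL l) (hgtL r)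
  | [], r => by simp [hgtL]
  | f :: l, r => by simp [hgtL, hgtL_append l r, max_assoc]

theorem lamL_append : ∀ l r : List (Tm Ax Chan), lamL (l ++ r) = lamL l + lamL r
  | [], r => by simp [lamL]
  | f :: l, r => by simp [lamL, lamL_append l r, add_assoc]

theorem hgt_le_hgtL_of_mem {f : Tm Ax Chan} : ∀ {fs : List (Tm Ax Chan)}, f ∈ fs → hgt f ≤ hgtL fs
  | g :: fs, h => by
    obtain rfl | h := List.mem_cons.1 h
    · exact le_max_left ..
    · exact (hgt_le_hgtL_of_mem h).trans (le_max_right ..)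

theorem hgtL_map_le_add (F : Tm Ax Chan → Tm Ax Chan) (c : ℕ) (hF : ∀ f, hgt (F f) ≤ hgt f + c) :
    ∀ fs : List (Tm Ax Chan), hgtL (fs.map F) ≤ hgtL fs + c
  | [] => by simp [hgtL]
  | f :: fs => by
    simp only [List.map_cons, hgtL]
    exact max_le ((hF f).trans (by gcongr; exact le_max_left ..))
      ((hgtL_map_le_add F c hF fs).trans (by gcongr; exact le_max_right ..))

mutual
theorem le_hgt_of_mem_lam {y : ℕ} : ∀ {t : Tm Ax Chan}, y ∈ lam t → y ≤ hgt t
  | .cot _ fs, hy | .tup _ fs, hy => (le_hgtL_of_mem_lamL hy).trans (by simp [hgt])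
  | .prj _ _ f, hy | .inj _ _ f, hy => (le_hgt_of_mem_lam (t := f) hy).trans (by simp [hgt])
  | .cut γ f g, hy => by
    simp only [lam, Multiset.mem_cons, Multiset.mem_add] at hy
    obtain rfl | hy | hy := hy
    · exact le_rfl
    · exact (le_hgt_of_mem_lam hy).trans (by simp [hgt])
    · exact (le_hgt_of_mem_lam hy).trans (by simp [hgt])

theorem le_hgtL_of_mem_lamL {y : ℕ} : ∀ {fs : List (Tm Ax Chan)}, y ∈ lamL fs → y ≤ hgtL fs
  | f :: fs, hy => by
    obtain hy | hy := Multiset.mem_add.1 hy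
    · exact (le_hgt_of_mem_lam hy).trans (le_max_left ..)
    · exact (le_hgtL_of_mem_lamL hy).trans (le_max_right ..)
end

theorem lamL_map_range (G : ℕ → Tm Ax Chan) :
    ∀ n, lamL ((List.range n).map G) = ∑ i ∈ Finset.range n, lam (G i)
  | 0 => by simp [lamL]
  | n + 1 => by
    rw [List.range_succ, List.map_append, lamL_append, Finset.sum_range_succ, lamL_map_range G n]
    simp [lamL]

theorem hgtL_map_range (G : ℕ → Tm Ax Chan) :
    ∀ n, hgtL ((List.range n).map G) = (Finset.range n).sup fun i => hgt (G i)
  | 0 => by simp [hgtL]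
  | n + 1 => by
    rw [List.range_succ, List.map_append, hgtL_append, Finset.range_add_one, Finset.sup_insert,
      hgtL_map_range G n]
    simp [hgtL, max_comm]

theorem Red.hgt_le {t₁ t₂ : Tm Ax Chan} (h : Red t₁ t₂) : hgt t₂ ≤ hgt t₁ := by
  induction h with
  | r1 | r2 => simp [hgt]
  | r3 γ α fs g | r9 γ α fs g =>
    have := hgtL_map_le_add (.cut γ · g) (hgt g) (fun _ => le_rfl) fs
    simp only [hgt]; omega
  | r4 γ β f gs | r10 γ β f gs =>
    have := hgtL_map_le_add (.cut γ f ·) (hgt f) (fun _ => (add_comm ..).le) gs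
    simp only [hgt]; omega
  | r5 | r6 | r7 | r8 => simp only [hgt]; omega
  | r11 γ k f gs hk =>
    have := hgt_le_hgtL_of_mem (List.get_mem gs ⟨k, hk⟩)
    simp only [hgt]; omega
  | r12 γ k fs g hk =>
    have := hgt_le_hgtL_of_mem (List.get_mem fs ⟨k, hk⟩)
    simp only [hgt]; omega
  | cotC _ _ _ _ ih | tupC _ _ _ _ ih =>
    simp only [hgt, hgtL_append, hgtL]; gcongr
  | prjC _ _ _ ih | injC _ _ _ ih | cutL _ _ _ ih | cutR _ _ _ ih => simp only [hgt]; omega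

theorem isDershowitzMannaLT_lam_cut {t : Tm Ax Chan} {γ : Chan} {f g : Tm Ax Chan}
    (h : hgt t < hgt f + hgt g) : IsDershowitzMannaLT (lam t) (lam (.cut γ f g)) :=
  isDershowitzMannaLT_of_forall_lt (mem_cons_self ..) fun _ hy => (le_hgt_of_mem_lam hy).trans_lt h

theorem isDershowitzMannaLT_lamL_cut {ts : List (Tm Ax Chan)} {γ : Chan} {f g : Tm Ax Chan}
    (h : hgtL ts < hgt f + hgt g) : IsDershowitzMannaLT (lamL ts) (lam (.cut γ f g)) :=
  isDershowitzMannaLT_of_forall_lt (mem_cons_self ..) fun _ hy => (le_hgtL_of_mem_lamL hy).trans_lt h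

theorem Red.isDershowitzMannaLT_lam {t₁ t₂ : Tm Ax Chan} (h : Red t₁ t₂) :
    IsDershowitzMannaLT (lam t₂) (lam t₁) := by
  induction h with
  | r1 | r2 => exact isDershowitzMannaLT_lam_cut (by simp [hgt])
  | r3 γ α fs g | r9 γ α fs g =>
    have := hgtL_map_le_add (.cut γ · g) (hgt g) (fun _ => le_rfl) fs
    exact isDershowitzMannaLT_lamL_cut (by simp only [hgt]; omega)
  | r4 γ β f gs | r10 γ β f gs =>
    have := hgtL_map_le_add (.cut γ f ·) (hgt f) (fun _ => (add_comm ..).le) gs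
    exact isDershowitzMannaLT_lamL_cut (by simp only [hgt]; omega)
  | r5 γ _ _ f g | r6 γ _ _ f g | r7 γ _ _ f g | r8 γ _ _ f g =>
    exact isDershowitzMannaLT_lam_cut (t := .cut γ f g) (by simp only [hgt]; omega)
  | r11 γ k f gs hk =>
    have := hgt_le_hgtL_of_mem (List.get_mem gs ⟨k, hk⟩)
    exact isDershowitzMannaLT_lam_cut (by simp only [hgt]; omega)
  | r12 γ k fs g hk =>
    have := hgt_le_hgtL_of_mem (List.get_mem fs ⟨k, hk⟩)
    exact isDershowitzMannaLT_lam_cut (by simp only [hgt]; omega)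
  | cotC _ _ _ _ ih | tupC _ _ _ _ ih =>
    simp only [lam, lamL_append, lamL]
    exact (ih.add_right _).add_left _
  | prjC _ _ _ ih | injC _ _ _ ih => exact ih
  | cutL _ g h ih => exact (ih.add_right (lam g)).cons_of_le (by simp only [hgt]; grw [h.hgt_le])
  | cutR _ f h ih => exact (ih.add_left (lam f)).cons_of_le (by simp only [hgt]; grw [h.hgt_le])

theorem PcNN.hgt_eq {t₁ t₂ : Tm Ax Chan} (h : PcNN t₁ t₂) : hgt t₁ = hgt t₂ := by
  induction h with
  | c13 _ _ n m _ _ hn hm | c14 _ _ n m _ _ hn hm | c19 _ _ n m _ _ hn hm =>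
    simp only [hgt, hgtL_map_range, Finset.add_sup (Finset.nonempty_range_iff.2 hn.ne'),
      Finset.add_sup (Finset.nonempty_range_iff.2 hm.ne')]
    exact Finset.sup_comm ..
  | c15 _ _ n _ _ _ hn | c16 _ _ n _ _ _ hn | c17 _ _ n _ _ _ hn | c18 _ _ n _ _ _ hn =>
    simp only [hgt, hgtL_map_range, ← Finset.add_sup (Finset.nonempty_range_iff.2 hn.ne')]
  | c20 | c21 | c22 => rfl
  | symm _ ih => exact ih.symm
  | cotC _ _ _ _ ih | tupC _ _ _ _ ih => simp only [hgt, hgtL_append, hgtL, ih]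
  | prjC _ _ _ ih | injC _ _ _ ih | cutL _ _ _ ih | cutR _ _ _ ih => simp only [hgt, ih]

theorem PcNN.lam_eq {t₁ t₂ : Tm Ax Chan} (h : PcNN t₁ t₂) : lam t₁ = lam t₂ := by
  induction h with
  | c13 | c14 | c19 => simp only [lam, lamL_map_range]; exact Finset.sum_comm
  | c15 | c16 | c17 | c18 => simp only [lam, lamL_map_range]
  | c20 | c21 | c22 => rfl
  | symm _ ih => exact ih.symm
  | cotC _ _ _ _ ih | tupC _ _ _ _ ih => simp only [lam, lamL_append, lamL, ih]
  | prjC _ _ _ ih | injC _ _ _ ih => exact ih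
  | cutL _ _ h ih | cutR _ _ h ih => simp only [lam, hgt, h.hgt_eq, ih]

theorem cut_measure :
    (∀ t₁ t₂ : Tm Ax Chan, Red t₁ t₂ → DMlt (lam t₂) (lam t₁)) ∧
    (∀ t₁ t₂ : Tm Ax Chan, PcNN t₁ t₂ → lam t₁ = lam t₂) :=
  ⟨fun _ _ h => dmlt_iff_isDershowitzMannaLT.2 h.isDershowitzMannaLT_lam, fun _ _ h => h.lam_eq⟩

end Stmt1
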